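/- arXiv:2107.06523 — 8 statements merged into one kernel-verified Lean document; each statement's English description precedes it below -/
import Mathlib

section
/- Let (x_n)_{n≥1} ⊆ [0,1] be a sequence and k ≥ 2 an integer. Assume that for some scales s_1,…,s_{k-1} > 0 one has limsup_{N→∞} R_k(s_1,…,s_{k-1},N) = ∞. Then for every integer p ≥ k the sequence (x_n) does not have Poissonian p-th order correlations. -/
open Finset Filter MeasureTheory
open scoped Classical ENNReal NNReal

/-- Distance from `x` to the nearest integer. -/
noncomputable def nint (x : ℝ) : ℝ := |x - round x|

/-- Signed distance from `x` to the origin modulo 1. -/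
noncomputable def sdist (x : ℝ) : ℝ :=
  if Int.fract x ≤ 1 / 2 then Int.fract x else Int.fract x - 1

/-- Number of `k`-tuples of pairwise distinct indices in `{1,…,N}` whose rescaled signed
differences lie in the box `∏ r, [a r, b r]`. -/
noncomputable def corrBoxCount (x : ℕ → ℝ) (k N : ℕ) (a b : Fin (k - 1) → ℝ) : ℕ :=
  ((Fintype.piFinset fun _ : Fin k => Finset.Icc 1 N).filter fun i =>
    Function.Injective i ∧ ∀ r : Fin (k - 1),
      (N : ℝ) * sdist (x (i ⟨0, by have := r.2; omega⟩) - x (i ⟨r.1 + 1, by have := r.2; omega⟩))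
        ∈ Set.Icc (a r) (b r)).card

/-- The sequence `x` (indexed by `n ≥ 1`) has Poissonian correlations of order `k`. -/
def HasPoissonianCorr (x : ℕ → ℝ) (k : ℕ) : Prop :=
  ∀ a b : Fin (k - 1) → ℝ, (∀ r, a r ≤ b r) →
    Tendsto (fun N : ℕ => (corrBoxCount x k N a b : ℝ) / N) atTop
      (nhds (∏ r, (b r - a r)))

/-- The `k`-th order correlation function `R_k(s₁,…,s_{k-1},N)` (pairwise distinct indices). -/
noncomputable def Rcorr (x : ℕ → ℝ) (k N : ℕ) (s : Fin (k - 1) → ℝ) : ℝ :=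
  (((Fintype.piFinset fun _ : Fin k => Finset.Icc 1 N).filter fun i =>
    Function.Injective i ∧ ∀ r : Fin (k - 1),
      nint (x (i ⟨0, by have := r.2; omega⟩) - x (i ⟨r.1 + 1, by have := r.2; omega⟩))
        ≤ s r / N).card : ℝ) / N

/-- The `k`-th order correlation function `R_k^*(s₁,…,s_{k-1},N)` (indices not necessarily
distinct). -/
noncomputable def RcorrStar (x : ℕ → ℝ) (k N : ℕ) (s : Fin (k - 1) → ℝ) : ℝ :=
  (((Fintype.piFinset fun _ : Fin k => Finset.Icc 1 N).filter fun i =>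
    ∀ r : Fin (k - 1),
      nint (x (i ⟨0, by have := r.2; omega⟩) - x (i ⟨r.1 + 1, by have := r.2; omega⟩))
        ≤ s r / N).card : ℝ) / N

/-! Fix `S ≥ 0` dominating all the scales `s r`, and let `d_m` be the number of indices `n ≠ m`
in `{1,…,N}` with `‖x_m - x_n‖ ≤ S/N`. A tuple counted by `R_k(s, N)` is a first index `m`
followed by `k - 1` such neighbours of `m`, so `N · R_k ≤ ∑_m d_m^(k-1)`. Conversely, `m` followed
by `p - 1` distinct neighbours is a `p`-tuple counted by the box `[-S, S]^(p-1)`, so that box counts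
at least `∑_m d_m (d_m - 1) ⋯ (d_m - p + 2)` tuples. Since
`d^(k-1) ≤ (2(p-1))^(p-1) + 2^(p-1) d (d-1) ⋯ (d-p+2)` (split according to `d < 2(p-1)` or not),
Poissonian `p`-th order correlations would keep `R_k(s, N)` bounded in `N`. -/

lemma abs_sdist_eq_nint (y : ℝ) : |sdist y| = nint y := by
  have h0 := Int.fract_nonneg y
  have h1 := Int.fract_lt_one y
  rw [nint, abs_sub_round_eq_min, sdist]
  split_ifs with h
  · rw [abs_of_nonneg h0, min_eq_left (by linarith)]
  · rw [abs_of_neg (by linarith), min_eq_right (by linarith), neg_sub]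

lemma card_filter_injective_piFinset {α : Type*} [DecidableEq α] (n : ℕ) (t : Finset α) :
    ((Fintype.piFinset fun _ : Fin n => t).filter Function.Injective).card
      = t.card.descFactorial n := by
  calc _ = Fintype.card (Fin n ↪ t) := by
        rw [← Fintype.card_coe]
        refine Fintype.card_congr
          { toFun := fun f => ⟨fun i => ⟨f.1 i, ?_⟩, fun a b h => ?_⟩
            invFun := fun g => ⟨fun i => g i, ?_⟩
            left_inv := fun _ => rfl
            right_inv := fun _ => rfl }
        · exact Fintype.mem_piFinset.mp (mem_filter.mp f.2).1 i
        · exact (mem_filter.mp f.2).2 (congrArg Subtype.val h)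
        · exact mem_filter.mpr ⟨Fintype.mem_piFinset.mpr fun i => (g i).2,
            fun a b h => g.injective (Subtype.ext h)⟩
    _ = _ := by rw [Fintype.card_embedding_eq, Fintype.card_coe, Fintype.card_fin]

lemma pow_le_add_two_pow_mul_descFactorial {a b : ℕ} (hab : a ≤ b) (d : ℕ) :
    d ^ a ≤ (2 * b) ^ b + 2 ^ b * d.descFactorial b := by
  obtain rfl | hb := Nat.eq_zero_or_pos b
  · simp [Nat.le_zero.mp hab]
  rcases lt_or_ge d (2 * b) with hd | hd
  · have : d ^ a ≤ (2 * b) ^ b := (Nat.pow_le_pow_left hd.le a).trans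
      (Nat.pow_le_pow_right (by omega) hab)
    omega
  · calc d ^ a ≤ d ^ b := Nat.pow_le_pow_right (by omega) hab
      _ ≤ (2 * (d + 1 - b)) ^ b := Nat.pow_le_pow_left (by omega) b
      _ = 2 ^ b * (d + 1 - b) ^ b := mul_pow ..
      _ ≤ 2 ^ b * d.descFactorial b := Nat.mul_le_mul_left _ (Nat.pow_sub_le_descFactorial d b)
      _ ≤ _ := Nat.le_add_left ..

noncomputable def neighbors (x : ℕ → ℝ) (N : ℕ) (S : ℝ) (m : ℕ) : Finset ℕ :=
  (Icc 1 N).filter fun n => n ≠ m ∧ nint (x m - x n) ≤ S / N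

lemma Rcorr_le_sum_card_neighbors_pow (x : ℕ → ℝ) (j N : ℕ) (s : Fin j → ℝ) {S : ℝ}
    (hsS : ∀ r, s r ≤ S) :
    Rcorr x (j + 1) N s ≤ (∑ m ∈ Icc 1 N, (neighbors x N S m).card ^ j : ℕ) / N := by
  unfold Rcorr
  gcongr
  calc _ ≤ ((Icc 1 N).sigma fun m => Fintype.piFinset fun _ : Fin j => neighbors x N S m).card := by
        refine card_le_card_of_injOn (fun i => ⟨i 0, Fin.tail i⟩) (fun i hi => ?_) ?_
        · obtain ⟨hiN, hinj, hnear⟩ := mem_filter.mp hi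
          simp only [coe_sigma, Set.mem_sigma_iff, mem_coe, Fintype.mem_piFinset] at hiN ⊢
          refine ⟨hiN 0, fun r => mem_filter.mpr ⟨hiN r.succ, hinj.ne (Fin.succ_ne_zero r), ?_⟩⟩
          exact (hnear r).trans (by gcongr; exact hsS r)
        · intro i _ i' _ h
          simp only [Sigma.mk.injEq, heq_eq_eq] at h
          rw [← Fin.cons_self_tail i, ← Fin.cons_self_tail i', h.1, h.2]
    _ = _ := by simp only [card_sigma, Fintype.card_piFinset_const]

lemma sum_card_neighbors_descFactorial_le (x : ℕ → ℝ) (q N : ℕ) (S : ℝ) :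
    ∑ m ∈ Icc 1 N, (neighbors x N S m).card.descFactorial q
      ≤ corrBoxCount x (q + 1) N (fun _ => -S) (fun _ => S) := by
  simp only [← card_filter_injective_piFinset, ← card_sigma]
  refine card_le_card_of_injOn (fun f => Fin.cons f.1 f.2) (fun f hf => ?_)
    fun f _ f' _ h => Sigma.ext (Fin.cons_injective2 h).1 (heq_of_eq (Fin.cons_injective2 h).2)
  obtain ⟨m, f⟩ := f
  simp only [coe_sigma, Set.mem_sigma_iff, mem_coe, mem_filter, Fintype.mem_piFinset] at hf
  obtain ⟨hm, hfN, hinj⟩ := hf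
  have hmem : ∀ r, f r ∈ Icc 1 N ∧ f r ≠ m ∧ nint (x m - x (f r)) ≤ S / N :=
    fun r => mem_filter.mp (hfN r)
  have hN : (0 : ℝ) < N := by
    obtain ⟨h1, h2⟩ := mem_Icc.mp hm
    exact_mod_cast (by omega : 0 < N)
  refine mem_filter.mpr ⟨Fintype.mem_piFinset.mpr (Fin.cases hm fun r => (hmem r).1),
    Fin.cons_injective_iff.mpr ⟨fun ⟨r, hr⟩ => (hmem r).2.1 hr, hinj⟩, fun r => ?_⟩
  have hr := (hmem r).2.2
  rw [← abs_sdist_eq_nint, le_div_iff₀ hN] at hr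
  change N * sdist (x m - x (f r)) ∈ Set.Icc (-S) S
  rw [Set.mem_Icc, ← abs_le, abs_mul, Nat.abs_cast]
  linarith

lemma Rcorr_le_corrBoxCount (x : ℕ → ℝ) {j q : ℕ} (hjq : j ≤ q) (N : ℕ) (s : Fin j → ℝ) {S : ℝ}
    (hsS : ∀ r, s r ≤ S) :
    Rcorr x (j + 1) N s
      ≤ (2 * q) ^ q + 2 ^ q * (corrBoxCount x (q + 1) N (fun _ => -S) (fun _ => S) / N) := by
  have hsum : ∑ m ∈ Icc 1 N, (neighbors x N S m).card ^ j
      ≤ N * (2 * q) ^ q + 2 ^ q * corrBoxCount x (q + 1) N (fun _ => -S) (fun _ => S) :=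
    calc _ ≤ ∑ m ∈ Icc 1 N, ((2 * q) ^ q + 2 ^ q * (neighbors x N S m).card.descFactorial q) :=
          sum_le_sum fun m _ => pow_le_add_two_pow_mul_descFactorial hjq _
      _ = N * (2 * q) ^ q + 2 ^ q * ∑ m ∈ Icc 1 N, (neighbors x N S m).card.descFactorial q := by
          rw [sum_add_distrib, sum_const, Nat.card_Icc, ← mul_sum, smul_eq_mul, Nat.add_sub_cancel]
      _ ≤ _ := by gcongr; exact sum_card_neighbors_descFactorial_le x q N S
  refine (Rcorr_le_sum_card_neighbors_pow x j N s hsS).trans ?_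
  rcases N.eq_zero_or_pos with rfl | hN
  · simp only [CharP.cast_eq_zero, div_zero, mul_zero, add_zero]
    positivity
  have hN' : (0 : ℝ) < N := by exact_mod_cast hN
  rw [div_le_iff₀ hN', add_mul, mul_div_assoc', div_mul_cancel₀ _ hN'.ne']
  exact_mod_cast hsum.trans_eq (by ring)

theorem limsup_Rk_infinite_implies_not_poissonian_higher_general
    (k : ℕ) (hk : 2 ≤ k) (x : ℕ → ℝ)
    (s : Fin (k - 1) → ℝ)
    (hinf : ∀ M : ℝ, ∃ᶠ N in atTop, M ≤ Rcorr x k N s) :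
    ∀ p : ℕ, k ≤ p → ¬ HasPoissonianCorr x p := by
  intro p hkp hpoisson
  obtain ⟨j, rfl⟩ : ∃ j, k = j + 1 := ⟨k - 1, by omega⟩
  obtain ⟨q, rfl⟩ : ∃ q, p = q + 1 := ⟨p - 1, by omega⟩
  set S := ∑ r, |s r|
  have hsS : ∀ r, s r ≤ S := fun r =>
    (le_abs_self _).trans (single_le_sum (fun r _ => abs_nonneg (s r)) (mem_univ r))
  have hS : -S ≤ S := neg_le_self (sum_nonneg fun r _ => abs_nonneg (s r))
  obtain ⟨C, hC⟩ := (hpoisson (fun _ => -S) (fun _ => S) fun _ => hS).isBoundedUnder_le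
  obtain ⟨N, hN, hCN⟩ := ((hinf ((2 * q) ^ q + 2 ^ q * C + 1)).and_eventually hC).exists
  have hR := Rcorr_le_corrBoxCount x (by omega : j ≤ q) N s hsS
  have hbox : 2 ^ q * (corrBoxCount x (q + 1) N (fun _ => -S) (fun _ => S) / N : ℝ) ≤ 2 ^ q * C := by
    gcongr; exact hCN
  linarith

/-- If `limsup_N R_k(s₁,…,s_{k-1},N) = ∞` for some scales, then the sequence
does not have Poissonian `p`-th order correlations for any `p ≥ k`. -/
theorem limsup_Rk_infinite_implies_not_poissonian_higher
    (k : ℕ) (hk : 2 ≤ k) (x : ℕ → ℝ) (hx : ∀ n, x n ∈ Set.Icc (0 : ℝ) 1)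
    (s : Fin (k - 1) → ℝ) (hs : ∀ r, 0 < s r)
    (hinf : ∀ M : ℝ, ∃ᶠ N in atTop, M ≤ Rcorr x k N s) :
    ∀ p : ℕ, k ≤ p → ¬ HasPoissonianCorr x p :=
  limsup_Rk_infinite_implies_not_poissonian_higher_general k hk x s hinf
end

section
/- For every integer m ≥ 2 there exists a constant s_m > 0 such that for every s > s_m there exists N_0 = N_0(s,m) (independent of the sequence) with the following property: for every sequence (x_n)_{n≥1} ⊆ [0,1] and every N ≥ N_0 one has R_m(s/3, N) ≤ (6/s)·R_{m+1}(s, N). -/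
open Finset Filter MeasureTheory
open scoped Classical ENNReal NNReal

/-!
Cut `ℝ/ℤ` into `K ≈ 3N/s` arcs of length `1/K` and let `w a` count the points lying in the arc
of `x a` or in one of its two neighbours. Every point within `s/(3N) ≤ 1/K` of `x a` lies in these
three arcs, and all of them lie within `2/K ≤ s/N` of `x a`. Counting tuples anchored at `a` gives,
with falling factorials, `N·R_m(s/3) ≤ ∑ₐ (w a - 1)^{(m-1)}` and `∑ₐ (w a - 1)^{(m)} ≤ N·R_{m+1}(s)`.
Now `(w - 1)^{(m)} = (w - 1)^{(m-1)}·(w - m)`, and by Cauchy–Schwarz over the arcs the mean of `w`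
is at least `N/K ≥ s/3`; as both factors increase with `w`, Chebyshev's sum inequality gives
`∑ₐ (w a - 1)^{(m)} ≥ (s/3 - m)·∑ₐ (w a - 1)^{(m-1)} ≥ (s/6)·∑ₐ (w a - 1)^{(m-1)}` once `s ≥ 6m`.
-/
section Tuples

variable {α : Type*}

theorem card_filter_injective_piFinset_s9 (B : Finset α) (k : ℕ) :
    #{f ∈ Fintype.piFinset fun _ : Fin k => B | Function.Injective f} = (#B).descFactorial k := by
  have h := Fintype.card_embedding_eq (α := Fin k) (β := B)
  rw [Fintype.card_fin, Fintype.card_coe] at h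
  rw [← h]
  exact Finset.card_eq_of_equiv_fintype
    { toFun := fun f => ⟨fun i => ⟨f.1 i, Fintype.mem_piFinset.mp (mem_filter.mp f.2).1 i⟩,
        fun i j h => (mem_filter.mp f.2).2 (congrArg Subtype.val h)⟩
      invFun := fun e => ⟨fun i => e i, mem_filter.mpr
        ⟨Fintype.mem_piFinset.mpr fun i => (e i).2, Subtype.val_injective.comp e.injective⟩⟩
      left_inv := fun f => rfl
      right_inv := fun e => rfl }

noncomputable def anchoredTuples (S : Finset α) (R : α → α → Prop) (k : ℕ) :
    Finset (Fin (k + 1) → α) :=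
  {f ∈ Fintype.piFinset fun _ => S | Function.Injective f ∧ ∀ r : Fin k, R (f 0) (f r.succ)}

theorem card_anchoredTuples (S : Finset α) (R : α → α → Prop) (k : ℕ) :
    #(anchoredTuples S R k) = ∑ a ∈ S, (#({b ∈ S | R a b}.erase a)).descFactorial k := by
  rw [card_eq_sum_card_fiberwise (f := fun f => f 0) (t := S) fun f hf => by
    simp only [anchoredTuples, coe_filter, Fintype.mem_piFinset] at hf
    exact hf.1 0]
  refine sum_congr rfl fun a ha => ?_
  rw [← card_filter_injective_piFinset_s9]
  refine card_nbij' Fin.tail (fun g => Fin.cons a g) ?_ ?_ ?_ ?_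
  · intro f hf
    simp only [anchoredTuples, coe_filter, mem_filter, Fintype.mem_piFinset,
      Set.mem_ofPred_eq] at hf
    obtain ⟨⟨hS, hinj, hR⟩, rfl⟩ := hf
    simp only [coe_filter, Fintype.mem_piFinset, mem_erase, mem_filter, Set.mem_ofPred_eq]
    exact ⟨fun i => ⟨fun h => Fin.succ_ne_zero i (hinj h), hS _, hR i⟩,
      hinj.comp (Fin.succ_injective _)⟩
  · intro g hg
    simp only [coe_filter, Fintype.mem_piFinset, mem_erase, ne_eq, mem_filter, Set.mem_ofPred_eq,
      anchoredTuples, Fin.forall_fin_succ, Fin.cons_zero, Fin.cons_succ, Fin.cons_injective_iff,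
      Set.mem_range, not_exists, and_true] at hg ⊢
    exact ⟨⟨ha, fun i => (hg.1 i).2.1⟩, ⟨fun i => (hg.1 i).1, hg.2⟩, fun r => (hg.1 r).2.2⟩
  · intro f hf
    simp only [anchoredTuples, coe_filter, mem_filter] at hf
    simp [← hf.2]
  · intro g _
    exact Fin.tail_cons _ _

theorem anchoredTuples_mono (S : Finset α) {R R' : α → α → Prop} (k : ℕ)
    (h : ∀ a b, R a b → R' a b) : anchoredTuples S R k ⊆ anchoredTuples S R' k := by
  intro f hf
  simp only [anchoredTuples, mem_filter] at hf ⊢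
  exact ⟨hf.1, hf.2.1, fun r => h _ _ (hf.2.2 r)⟩

end Tuples

theorem sq_card_le_card_mul_sum_card_fiber {ι κ : Type*} [Fintype κ] (S : Finset ι) (g : ι → κ) :
    #S ^ 2 ≤ Fintype.card κ * ∑ a ∈ S, #{b ∈ S | g b = g a} := by
  have hfib : ∑ a ∈ S, #{b ∈ S | g b = g a} = ∑ t, #{b ∈ S | g b = t} ^ 2 := by
    rw [← sum_fiberwise S g]
    refine sum_congr rfl fun t _ => ?_
    rw [sum_congr rfl fun a ha => by rw [(mem_filter.mp ha).2], sum_const, smul_eq_mul, sq]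
  rw [hfib, card_eq_sum_card_fiberwise fun a _ => mem_univ (g a)]
  exact sq_sum_le_card_mul_sum_sq

theorem mul_sum_descFactorial_le_sum_descFactorial_succ {ι : Type*} (S : Finset ι) (w : ι → ℕ)
    (k : ℕ) {c : ℝ} (h : #S * (c + (k + 1)) ≤ ∑ a ∈ S, (w a : ℝ)) :
    c * ∑ a ∈ S, ((w a - 1).descFactorial k : ℝ) ≤
      ∑ a ∈ S, ((w a - 1).descFactorial (k + 1) : ℝ) := by
  rcases S.eq_empty_or_nonempty with rfl | hS
  · simp
  set u : ι → ℝ := fun a => ((w a - 1).descFactorial k : ℝ)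
  set v : ι → ℝ := fun a => (w a : ℝ) - (k + 1)
  have hmono : MonovaryOn u v S := fun i _ j _ hv => by
    have : w i ≤ w j := by exact_mod_cast (show (w i : ℝ) < w j by simp only [v] at hv; linarith).le
    exact Nat.cast_le.mpr (Nat.descFactorial_le _ (by omega))
  have hv : #S * c ≤ ∑ a ∈ S, v a := by
    simp only [v, sum_sub_distrib, sum_const, nsmul_eq_mul]
    linarith
  have huv : ∀ a ∈ S, u a * v a ≤ ((w a - 1).descFactorial (k + 1) : ℝ) := fun a _ => by
    rcases le_or_gt (k + 1) (w a) with hw | hw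
    · rw [Nat.descFactorial_succ, Nat.cast_mul, Nat.cast_sub (by omega), Nat.cast_sub (by omega)]
      simp only [u, v]
      push_cast
      linarith
    · have : v a < 0 := by
        have : (w a : ℝ) < k + 1 := by exact_mod_cast hw
        simp only [v]; linarith
      nlinarith [show 0 ≤ u a by positivity, Nat.zero_le ((w a - 1).descFactorial (k + 1))]
  have hu : 0 ≤ ∑ a ∈ S, u a := sum_nonneg fun a _ => by positivity
  have hcard : (0 : ℝ) < #S := by exact_mod_cast hS.card_pos
  refine le_of_mul_le_mul_left ?_ hcard
  calc #S * (c * ∑ a ∈ S, u a) = (∑ a ∈ S, u a) * (#S * c) := by ring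
    _ ≤ (∑ a ∈ S, u a) * ∑ a ∈ S, v a := mul_le_mul_of_nonneg_left hv hu
    _ ≤ #S * ∑ a ∈ S, u a * v a := hmono.sum_mul_sum_le_card_mul_sum
    _ ≤ #S * ∑ a ∈ S, ((w a - 1).descFactorial (k + 1) : ℝ) := by gcongr with a ha; exact huv a ha

theorem Int.abs_floor_sub_floor_le_one {R : Type*} [Ring R] [LinearOrder R] [IsStrictOrderedRing R]
    [FloorRing R] {u v : R} (h : |u - v| ≤ 1) : |⌊u⌋ - ⌊v⌋| ≤ 1 := by
  rw [abs_le] at h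
  have h₁ := Int.floor_mono (sub_le_iff_le_add'.mp h.2)
  have h₂ := Int.floor_mono (neg_le_sub_iff_le_add.mp h.1)
  rw [Int.floor_add_one] at h₁ h₂
  rw [abs_le]
  omega

/-- The index of the arc `[j/K, (j+1)/K)` of `ℝ/ℤ` containing `x`. -/
noncomputable def arc (K : ℕ) (x : ℝ) : ZMod K := ⌊x * K⌋

def ArcNear (K : ℕ) (x y : ℝ) : Prop := ∃ e : ℤ, |e| ≤ 1 ∧ arc K y = arc K x + e

theorem arcNear_of_nint_le {K : ℕ} (hK : 0 < K) {x y : ℝ} (h : nint (x - y) ≤ 1 / K) :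
    ArcNear K x y := by
  set k := round (x - y)
  have hKpos : (0 : ℝ) < K := by exact_mod_cast hK
  have hxy : |x * K - (y * K + ((k * K : ℤ) : ℝ))| ≤ 1 := by
    rw [nint, le_div_iff₀ hKpos] at h
    calc |x * K - (y * K + ((k * K : ℤ) : ℝ))| = |x - y - k| * K := by
          push_cast; rw [← abs_of_pos hKpos, ← abs_mul, abs_of_pos hKpos]; ring_nf
      _ ≤ 1 := h
  have hfl := Int.abs_floor_sub_floor_le_one hxy
  rw [Int.floor_add_intCast, abs_sub_comm] at hfl
  refine ⟨⌊y * K⌋ + k * K - ⌊x * K⌋, hfl, ?_⟩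
  simp only [arc]
  push_cast
  rw [ZMod.natCast_self]
  ring

theorem nint_le_of_arcNear {K : ℕ} (hK : 0 < K) {x y : ℝ} (h : ArcNear K x y) :
    nint (x - y) ≤ 2 / K := by
  obtain ⟨e, he, h⟩ := h
  have hKpos : (0 : ℝ) < K := by exact_mod_cast hK
  obtain ⟨q, hq⟩ : (K : ℤ) ∣ ⌊y * K⌋ - ⌊x * K⌋ - e := by
    rw [← ZMod.intCast_zmod_eq_zero_iff_dvd]
    simp only [arc] at h
    push_cast
    rw [h]
    ring
  have hqℝ : ((⌊y * K⌋ - ⌊x * K⌋ - e : ℤ) : ℝ) = K * q := by exact_mod_cast hq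
  push_cast at hqℝ
  have key : (x - y + q) * K = Int.fract (x * K) - Int.fract (y * K) - e := by
    rw [Int.fract, Int.fract]
    linear_combination (-1 : ℝ) * hqℝ
  have he' : |(e : ℝ)| ≤ 1 := by exact_mod_cast he
  rw [abs_le] at he'
  have hbound : |(x - y + q) * K| ≤ 2 := by
    rw [key, abs_le]
    constructor <;> linarith [Int.fract_nonneg (x * K), Int.fract_lt_one (x * K),
      Int.fract_nonneg (y * K), Int.fract_lt_one (y * K)]
  rw [abs_mul, abs_of_pos hKpos] at hbound
  calc nint (x - y) ≤ |x - y - ((-q : ℤ) : ℝ)| := round_le _ _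
    _ = |x - y + q| := by push_cast; ring_nf
    _ ≤ 2 / K := (le_div_iff₀ hKpos).mpr hbound

theorem mul_card_anchoredTuples_le_card_anchoredTuples_succ {ι : Type*} (S : Finset ι) (x : ι → ℝ) (k K : ℕ)
    {δ₁ δ₂ c : ℝ} (hK : 0 < K) (hδ₁ : δ₁ ≤ 1 / K) (hδ₂ : 2 / K ≤ δ₂) (hc : 0 ≤ c)
    (hS : K * (c + (k + 1)) ≤ #S) :
    c * #(anchoredTuples S (fun i j => nint (x i - x j) ≤ δ₁) k) ≤
      #(anchoredTuples S (fun i j => nint (x i - x j) ≤ δ₂) (k + 1)) := by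
  have : NeZero K := ⟨hK.ne'⟩
  set near : ι → ι → Prop := fun i j => ArcNear K (x i) (x j)
  set w : ι → ℕ := fun a => #{b ∈ S | near a b}
  have hcard : ∀ j, #(anchoredTuples S near j) = ∑ a ∈ S, (w a - 1).descFactorial j := fun j => by
    rw [card_anchoredTuples]
    refine sum_congr rfl fun a ha => ?_
    rw [card_erase_of_mem (mem_filter.mpr ⟨ha, 0, by simp⟩)]
  have hupper : #(anchoredTuples S (fun i j => nint (x i - x j) ≤ δ₁) k) ≤
      #(anchoredTuples S near k) :=
    card_le_card (anchoredTuples_mono S k fun a b h => arcNear_of_nint_le hK (h.trans hδ₁))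
  have hlower : #(anchoredTuples S near (k + 1)) ≤
      #(anchoredTuples S (fun i j => nint (x i - x j) ≤ δ₂) (k + 1)) :=
    card_le_card (anchoredTuples_mono S (k + 1) fun a b h => (nint_le_of_arcNear hK h).trans hδ₂)
  have hsum : #S * (c + (k + 1)) ≤ ∑ a ∈ S, (w a : ℝ) := by
    have hfib : #S ^ 2 ≤ K * ∑ a ∈ S, w a := by
      refine (sq_card_le_card_mul_sum_card_fiber S fun a => arc K (x a)).trans ?_
      rw [ZMod.card]
      gcongr with a
      refine card_le_card fun b hb => ?_
      simp only [mem_filter] at hb ⊢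
      exact ⟨hb.1, 0, by simp [hb.2]⟩
    have hKpos : (0 : ℝ) < K := by exact_mod_cast hK
    have hfibℝ : (#S : ℝ) ^ 2 ≤ K * ∑ a ∈ S, (w a : ℝ) := by exact_mod_cast hfib
    refine le_of_mul_le_mul_left ?_ hKpos
    nlinarith [Nat.cast_nonneg (α := ℝ) #S]
  calc c * #(anchoredTuples S (fun i j => nint (x i - x j) ≤ δ₁) k)
      ≤ c * ∑ a ∈ S, ((w a - 1).descFactorial k : ℝ) := by
        rw [← Nat.cast_sum, ← hcard]; gcongr
    _ ≤ ∑ a ∈ S, ((w a - 1).descFactorial (k + 1) : ℝ) :=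
        mul_sum_descFactorial_le_sum_descFactorial_succ S w k hsum
    _ ≤ #(anchoredTuples S (fun i j => nint (x i - x j) ≤ δ₂) (k + 1)) := by
        rw [← Nat.cast_sum, ← hcard]; exact_mod_cast hlower

theorem Rcorr_succ (x : ℕ → ℝ) (k N : ℕ) (s : ℝ) :
    Rcorr x (k + 1) N (fun _ => s) =
      #(anchoredTuples (Icc 1 N) (fun i j => nint (x i - x j) ≤ s / N) k) / N := by
  unfold Rcorr anchoredTuples
  congr

/-- For every `m ≥ 2` there is `s_m > 0` such that for every `s > s_m` there is
`N₀` (independent of the sequence) with `R_m(s/3,N) ≤ (6/s)·R_{m+1}(s,N)` for every sequence in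
`[0,1]` and every `N ≥ N₀`. -/
theorem Rm_le_Rm_succ
    (m : ℕ) (hm : 2 ≤ m) :
    ∃ sm : ℝ, 0 < sm ∧ ∀ s : ℝ, sm < s → ∃ N₀ : ℕ,
      ∀ x : ℕ → ℝ, (∀ n, x n ∈ Set.Icc (0 : ℝ) 1) → ∀ N : ℕ, N₀ ≤ N →
        Rcorr x m N (fun _ => s / 3) ≤ 6 / s * Rcorr x (m + 1) N (fun _ => s) := by
  obtain ⟨k, rfl⟩ : ∃ k, m = k + 1 := ⟨m - 1, by omega⟩
  refine ⟨6 * (k + 1), by positivity, fun s hs => ⟨⌈s⌉₊ + 1, fun x _ N hN => ?_⟩⟩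
  have hs0 : 0 < s := lt_trans (by positivity) hs
  have hsN : s < N := Nat.lt_of_ceil_lt (by omega)
  have hN : (0 : ℝ) < N := hs0.trans hsN
  set K := ⌊3 * N / s⌋₊
  have hK₁ : (K : ℝ) ≤ 3 * N / s := Nat.floor_le (by positivity)
  have hK₂ : 3 * N / s < K + 1 := Nat.lt_floor_add_one _
  rw [le_div_iff₀ hs0] at hK₁
  rw [div_lt_iff₀ hs0] at hK₂
  have hK : 0 < K := by exact_mod_cast (show (0 : ℝ) < K by nlinarith)
  have hKpos : (0 : ℝ) < K := by exact_mod_cast hK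
  have key := mul_card_anchoredTuples_le_card_anchoredTuples_succ (Icc 1 N) x k K (δ₁ := s / 3 / N)
    (δ₂ := s / N) (c := s / 6) hK
    (by rw [div_div, div_le_div_iff₀ (by positivity) hKpos]; linarith)
    (by rw [div_le_div_iff₀ hKpos hN]; linarith) (by positivity)
    (by rw [Nat.card_Icc, Nat.add_sub_cancel]; nlinarith)
  rw [Rcorr_succ, Rcorr_succ, ← mul_div_assoc]
  gcongr
  rw [div_mul_eq_mul_div, le_div_iff₀ hs0]
  linarith
end

section
/- Let k ≥ 2, let (x_n)_{n≥1} ⊆ [0,1] be any sequence, and let s_1 ≥ s_2 ≥ … ≥ s_{k-1} > 0. With the convention R_1(N) = 1, there exist positive integers b_1,…,b_{k-1} depending only on k (namely the Stirling numbers of the second kind b_m = S(k,m)) such that for all N ≥ 1: R_k^*(s_1,…,s_{k-1},N) ≤ R_k(s_1,…,s_{k-1},N) + Σ_{m=1}^{k-1} b_m·R_m(s_1,…,s_{m-1},N). -/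
open Finset Filter MeasureTheory
open scoped Classical ENNReal NNReal

/-!
Split the tuples counted by `R_k^*` into injective ones, counted by `R_k`, and those taking
`m ≤ k - 1` distinct values. Listing the values of such a tuple `i` in order of first appearance
gives an injective `m`-tuple `g` with `g 0 = i 0` whose `(r + 1)`-st entry sits at a position
`≥ r + 1` of `i`; as the scales decrease, `g` satisfies the conditions of `R_m` with the first
`m - 1` scales. Since `i` takes values in the range of `g`, at most `m ^ k` tuples `i` give the same
`g`, so `b_m = m ^ k` works.
-/

lemma Fin.val_le_of_strictMono {m k : ℕ} {f : Fin m → Fin k} (hf : StrictMono f) (j : Fin m) :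
    (j : ℕ) ≤ f j := by
  obtain ⟨n, hn⟩ := j
  induction n with
  | zero => exact Nat.zero_le _
  | succ n ih =>
    have hlt : f ⟨n, by omega⟩ < f ⟨n + 1, hn⟩ := hf (Fin.mk_lt_mk.mpr n.lt_succ_self)
    have := ih (by omega)
    rw [Fin.lt_def] at hlt
    simp only at this ⊢
    omega

section FirstOccurrences

variable {α : Type*} [DecidableEq α] {k m : ℕ}

def firstOccurrences (i : Fin k → α) : Finset (Fin k) :=
  univ.filter fun p => ∀ q < p, i q ≠ i p

lemma injOn_firstOccurrences (i : Fin k → α) : Set.InjOn i (firstOccurrences i) := by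
  intro p hp q hq hpq
  simp only [firstOccurrences, coe_filter, mem_univ, true_and, Set.mem_ofPred_eq] at hp hq
  rcases lt_trichotomy p q with h | h | h
  · exact absurd hpq (hq p h)
  · exact h
  · exact absurd hpq.symm (hp q h)

lemma image_firstOccurrences (i : Fin k → α) : (firstOccurrences i).image i = univ.image i := by
  refine (image_subset_image (subset_univ _)).antisymm ?_
  intro a ha
  obtain ⟨p, -, rfl⟩ := mem_image.mp ha
  set q := (univ.filter fun q => i q = i p).min' ⟨p, by simp⟩
  have hq : i q = i p := (mem_filter.mp (min'_mem (univ.filter fun q => i q = i p) _)).2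
  refine mem_image.mpr ⟨q, mem_filter.mpr ⟨mem_univ _, fun q' hq' hi => ?_⟩, hq⟩
  exact absurd (min'_le _ q' (by simp [hi, hq])) (not_le.mpr hq')

lemma card_image_mem_Icc_of_not_injective {i : Fin k → α} (hi : ¬ Function.Injective i) :
    #(univ.image i) ∈ Icc 1 (k - 1) := by
  have hk : k ≠ 0 := by
    rintro rfl
    exact hi (Function.injective_of_subsingleton i)
  have hpos : 0 < #(univ.image i) :=
    card_pos.mpr ⟨i ⟨0, by omega⟩, mem_image_of_mem i (mem_univ _)⟩
  have hne : #(univ.image i) ≠ k := fun h =>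
    hi (by simpa using card_image_iff.mp (h.trans (card_fin k).symm))
  have hle : #(univ.image i) ≤ k := card_image_le.trans_eq (card_fin k)
  exact mem_Icc.mpr ⟨hpos, by omega⟩

lemma exists_orderEmbedding_injective_comp (i : Fin k → α) (hm : #(univ.image i) = m)
    (hm0 : 0 < m) :
    ∃ e : Fin m ↪o Fin k, (e ⟨0, hm0⟩ : ℕ) = 0 ∧ Function.Injective (i ∘ e) ∧
      Set.range (i ∘ e) = Set.range i := by
  have hP : #(firstOccurrences i) = m := by
    rw [← hm, ← image_firstOccurrences, card_image_of_injOn (injOn_firstOccurrences i)]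
  have hk : 0 < k := by
    obtain ⟨a, ha⟩ := card_pos.mp (hm ▸ hm0)
    exact (mem_image.mp ha).choose.pos
  have h0 : (⟨0, hk⟩ : Fin k) ∈ firstOccurrences i :=
    mem_filter.mpr ⟨mem_univ _, fun q hq => absurd (Fin.lt_def.mp hq) (Nat.not_lt_zero _)⟩
  refine ⟨(firstOccurrences i).orderEmbOfFin hP, ?_, ?_, ?_⟩
  · rw [orderEmbOfFin_zero hP hm0]
    exact Nat.le_zero.mp (min'_le _ _ h0)
  · intro a b hab
    exact ((firstOccurrences i).orderEmbOfFin hP).injective <| injOn_firstOccurrences i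
      (orderEmbOfFin_mem _ hP a) (orderEmbOfFin_mem _ hP b) hab
  · rw [Set.range_comp, range_orderEmbOfFin, ← coe_image, image_firstOccurrences, coe_image,
      coe_univ, Set.image_univ]

end FirstOccurrences

section CloseTuples

variable (x : ℕ → ℝ) (N : ℕ) {k m : ℕ}

def IsCloseTuple (s : Fin (k - 1) → ℝ) (i : Fin k → ℕ) : Prop :=
  ∀ r : Fin (k - 1),
    nint (x (i ⟨0, by have := r.2; omega⟩) - x (i ⟨r.1 + 1, by have := r.2; omega⟩)) ≤ s r / N

noncomputable def closeTuples (s : Fin (k - 1) → ℝ) : Finset (Fin k → ℕ) :=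
  (Fintype.piFinset fun _ : Fin k => Icc 1 N).filter (IsCloseTuple x N s)

lemma RcorrStar_eq (s : Fin (k - 1) → ℝ) : RcorrStar x k N s = #(closeTuples x N s) / N := by
  unfold RcorrStar closeTuples IsCloseTuple
  congr

lemma Rcorr_eq (s : Fin (k - 1) → ℝ) :
    Rcorr x k N s = #((closeTuples x N s).filter Function.Injective) / N := by
  rw [closeTuples, filter_filter]
  simp only [Rcorr, IsCloseTuple, and_comm]

variable {x N}

lemma IsCloseTuple.comp_orderEmbedding {s : Fin (k - 1) → ℝ} {s' : Fin (m - 1) → ℝ}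
    (hs : ∀ (r : Fin (m - 1)) (p : Fin (k - 1)), r.1 ≤ p.1 → s p ≤ s' r) {i : Fin k → ℕ}
    (hi : IsCloseTuple x N s i) (e : Fin m ↪o Fin k) (hm0 : 0 < m) (he : (e ⟨0, hm0⟩ : ℕ) = 0) :
    IsCloseTuple x N s' (i ∘ e) := by
  intro r
  have hr := r.2
  have hj := Fin.val_le_of_strictMono e.strictMono ⟨r.1 + 1, by omega⟩
  have hek := (e ⟨r.1 + 1, by omega⟩).2
  simp only at hj
  obtain ⟨p, hrp, hp⟩ : ∃ p : Fin (k - 1), r.1 ≤ p.1 ∧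
      e ⟨r.1 + 1, by omega⟩ = ⟨p.1 + 1, by omega⟩ :=
    ⟨⟨(e ⟨r.1 + 1, by omega⟩ : ℕ) - 1, by omega⟩, by simp only; omega, Fin.ext (by simp only; omega)⟩
  have he0 : e ⟨0, hm0⟩ = ⟨0, by omega⟩ := Fin.ext he
  calc nint (x (i (e ⟨0, _⟩)) - x (i (e ⟨r.1 + 1, _⟩)))
      = nint (x (i ⟨0, by omega⟩) - x (i ⟨p.1 + 1, by omega⟩)) := by rw [he0, hp]
    _ ≤ s p / N := hi p
    _ ≤ s' r / N := div_le_div_of_nonneg_right (hs r p hrp) N.cast_nonneg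

lemma card_filter_card_image_eq_le {s : Fin (k - 1) → ℝ} {s' : Fin (m - 1) → ℝ}
    (hs : ∀ (r : Fin (m - 1)) (p : Fin (k - 1)), r.1 ≤ p.1 → s p ≤ s' r) (hm0 : 0 < m) :
    #((closeTuples x N s).filter fun i => #(univ.image i) = m) ≤
      m ^ k * #((closeTuples x N s').filter Function.Injective) := by
  set T := (closeTuples x N s').filter Function.Injective
  have hcover : ((closeTuples x N s).filter fun i => #(univ.image i) = m) ⊆
      T.biUnion fun g => Fintype.piFinset fun _ => univ.image g := by
    intro i hi
    obtain ⟨hiA, him⟩ := mem_filter.mp hi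
    obtain ⟨hiN, hiclose⟩ := mem_filter.mp hiA
    obtain ⟨e, he0, hinj, hrange⟩ := exists_orderEmbedding_injective_comp i him hm0
    refine mem_biUnion.mpr ⟨i ∘ e, mem_filter.mpr ⟨mem_filter.mpr ⟨?_, ?_⟩, hinj⟩, ?_⟩
    · exact Fintype.mem_piFinset.mpr fun j => Fintype.mem_piFinset.mp hiN (e j)
    · exact hiclose.comp_orderEmbedding hs e hm0 he0
    · refine Fintype.mem_piFinset.mpr fun p => ?_
      obtain ⟨j, hj⟩ : i p ∈ Set.range (i ∘ e) := hrange ▸ Set.mem_range_self p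
      exact hj ▸ mem_image_of_mem _ (mem_univ j)
  have hfibre : ∀ g ∈ T, #(Fintype.piFinset fun _ : Fin k => univ.image g) = m ^ k := by
    intro g hg
    rw [Fintype.card_piFinset, prod_const, card_univ, Fintype.card_fin,
      card_image_of_injective _ (mem_filter.mp hg).2, card_univ, Fintype.card_fin]
  calc _ ≤ _ := card_le_card hcover
    _ ≤ _ := card_biUnion_le
    _ = m ^ k * #T := by rw [sum_congr rfl hfibre, sum_const, smul_eq_mul, mul_comm]

lemma card_filter_not_injective_le {s : Fin (k - 1) → ℝ}
    {s' : (m : Icc 1 (k - 1)) → Fin (m.1 - 1) → ℝ}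
    (hs : ∀ m (r : Fin (m.1 - 1)) (p : Fin (k - 1)), r.1 ≤ p.1 → s p ≤ s' m r) :
    #((closeTuples x N s).filter fun i => ¬ Function.Injective i) ≤
      ∑ m ∈ (Icc 1 (k - 1)).attach,
        m.1 ^ k * #((closeTuples x N (s' m)).filter Function.Injective) := by
  rw [card_eq_sum_card_fiberwise fun i hi =>
    card_image_mem_Icc_of_not_injective (mem_filter.mp hi).2, ← sum_attach]
  refine sum_le_sum fun m _ => le_trans (card_le_card (filter_subset_filter _ (filter_subset _ _)))
    (card_filter_card_image_eq_le (hs m) (mem_Icc.mp m.2).1)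

end CloseTuples

/-- For decreasing scales `s₁ ≥ … ≥ s_{k-1} > 0` there are positive integers
`b₁,…,b_{k-1}` depending only on `k` with
`R_k^*(s₁,…,s_{k-1},N) ≤ R_k(s₁,…,s_{k-1},N) + ∑_{m=1}^{k-1} b_m·R_m(s₁,…,s_{m-1},N)`
(with the convention `R₁(N) = 1`, which holds for `Rcorr x 1 N` whenever `N ≥ 1`). -/
theorem RcorrStar_le_Rcorr_add_lower_orders
    (k : ℕ) :
    ∃ b : ℕ → ℕ, (∀ m : ℕ, 1 ≤ m → m ≤ k - 1 → 0 < b m) ∧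
      ∀ x : ℕ → ℝ, (∀ n, x n ∈ Set.Icc (0 : ℝ) 1) →
      ∀ s : Fin (k - 1) → ℝ, (∀ r, 0 < s r) →
        (∀ r r' : Fin (k - 1), r ≤ r' → s r' ≤ s r) →
      ∀ N : ℕ, 1 ≤ N →
        RcorrStar x k N s ≤ Rcorr x k N s +
          ∑ m ∈ (Finset.Icc 1 (k - 1)).attach,
            (b m.1 : ℝ) * Rcorr x m.1 N (fun r =>
              s ⟨r.1, by
                have h1 := r.2
                have h2 := (Finset.mem_Icc.mp m.2).2
                omega⟩) := by
  refine ⟨fun m => m ^ k, fun m hm _ => pow_pos hm k, fun x _ s _ hmono N _ => ?_⟩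
  have hcount := card_filter_not_injective_le (x := x) (N := N) (s := s)
    (s' := fun m r => s ⟨r.1, by have := r.2; have := (mem_Icc.mp m.2).2; omega⟩)
    fun _ _ _ h => hmono _ _ h
  simp only [RcorrStar_eq, Rcorr_eq, ← mul_div_assoc, ← sum_div, ← add_div,
    ← card_filter_add_card_filter_not (s := closeTuples x N s) Function.Injective]
  refine div_le_div_of_nonneg_right ?_ N.cast_nonneg
  exact_mod_cast Nat.add_le_add_left hcount _
end

section
/- Let k ≥ 2 and (x_n)_{n≥1} ⊆ [0,1] be any sequence. For every s > 0 and every N ≥ 1 one has R_2^*(s,N)^{k-1} ≤ R_k^*(s,N). -/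
open Finset Filter MeasureTheory
open scoped Classical ENNReal NNReal

lemma count_eq (x : ℕ → ℝ) (k N : ℕ) (hk : 1 ≤ k) (s : ℝ) :
    ((Fintype.piFinset fun _ : Fin k => Finset.Icc 1 N).filter fun i =>
      ∀ r : Fin (k - 1),
        nint (x (i ⟨0, by have := r.2; omega⟩) - x (i ⟨r.1 + 1, by have := r.2; omega⟩))
          ≤ s / N).card
    = ∑ m ∈ Finset.Icc 1 N,
        ((Finset.Icc 1 N).filter fun j => nint (x m - x j) ≤ s / N).card ^ (k - 1) := by
  have h0 : 0 < k := hk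
  have key : ∑ m ∈ Finset.Icc 1 N,
        ((Finset.Icc 1 N).filter fun j => nint (x m - x j) ≤ s / N).card ^ (k - 1)
      = ((Finset.Icc 1 N).sigma fun m =>
          Fintype.piFinset fun _ : Fin (k - 1) =>
            (Finset.Icc 1 N).filter fun j => nint (x m - x j) ≤ s / N).card := by
    rw [Finset.card_sigma]
    refine Finset.sum_congr rfl fun m _ => ?_
    rw [Fintype.card_piFinset]
    simp
  rw [key]
  refine Finset.card_bij'
    (i := fun f _ => ⟨f ⟨0, h0⟩, fun r => f ⟨r.1 + 1, by have := r.2; omega⟩⟩)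
    (j := fun p _ => fun j : Fin k =>
      if hj : j.1 = 0 then p.1 else p.2 ⟨j.1 - 1, by have := j.2; omega⟩)
    ?_ ?_ ?_ ?_
  · intro f hf
    rw [Finset.mem_filter, Fintype.mem_piFinset] at hf
    rw [Finset.mem_sigma]
    refine ⟨hf.1 _, ?_⟩
    rw [Fintype.mem_piFinset]
    intro r
    rw [Finset.mem_filter]
    exact ⟨hf.1 _, hf.2 r⟩
  · intro p hp
    rw [Finset.mem_sigma, Fintype.mem_piFinset] at hp
    rw [Finset.mem_filter, Fintype.mem_piFinset]
    constructor
    · intro j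
      by_cases hj : j.1 = 0
      · simpa [hj] using hp.1
      · simp only [hj, dif_neg, not_false_iff]
        exact Finset.mem_of_mem_filter _ (hp.2 _)
    · intro r
      have h1 : (⟨0, by have := r.2; omega⟩ : Fin k).1 = 0 := rfl
      have h2 : (⟨r.1 + 1, by have := r.2; omega⟩ : Fin k).1 ≠ 0 := by simp
      simp only [h1, dif_pos, h2, dif_neg, not_false_iff]
      have := hp.2 ⟨r.1 + 1 - 1, by have := r.2; omega⟩
      rw [Finset.mem_filter] at this
      have hre : (⟨r.1 + 1 - 1, by have := r.2; omega⟩ : Fin (k - 1)) = r := by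
        ext; simp
      rw [hre] at this
      exact this.2
  · intro f hf
    funext j
    by_cases hj : j.1 = 0
    · simp only [hj, dif_pos]
      congr 1
      ext; simp [hj]
    · simp only [hj, dif_neg, not_false_iff]
      congr 1
      ext
      simp
      omega
  · intro p hp
    refine Sigma.ext rfl (heq_of_eq ?_)
    funext r
    have h2 : (⟨r.1 + 1, by have := r.2; omega⟩ : Fin k).1 ≠ 0 := by simp
    simp only [h2, dif_neg, not_false_iff]
    congr 1

/-- For any sequence in `[0,1]`, any `k ≥ 2`, `s > 0` and `N ≥ 1`,
`R₂^*(s,N)^{k-1} ≤ R_k^*(s,N)`. -/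
theorem RcorrStar_two_pow_le_RcorrStar
    (k : ℕ) (hk : 2 ≤ k) (x : ℕ → ℝ) (hx : ∀ n, x n ∈ Set.Icc (0 : ℝ) 1)
    (s : ℝ) (hs : 0 < s) (N : ℕ) (hN : 1 ≤ N) :
    RcorrStar x 2 N (fun _ => s) ^ (k - 1) ≤ RcorrStar x k N (fun _ => s) := by
  have hN0 : (0 : ℝ) < N := by exact_mod_cast hN
  rw [RcorrStar, RcorrStar, count_eq x 2 N (by norm_num) s, count_eq x k N (by omega) s]
  push_cast
  set g : ℕ → ℝ := fun m =>
    (((Finset.Icc 1 N).filter fun j => nint (x m - x j) ≤ s / N).card : ℝ) with hg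
  have hcard : ((Finset.Icc 1 N).card : ℝ) = N := by
    rw [Nat.card_Icc]; push_cast; ring
  have hmain := pow_sum_div_card_le_sum_pow (s := Finset.Icc 1 N) (f := g)
    (fun i _ => by positivity) (k - 2)
  rw [hcard] at hmain
  have hkk : k - 2 + 1 = k - 1 := by omega
  rw [hkk] at hmain
  simp only [pow_one]
  rw [div_pow]
  have hNk : (N : ℝ) ^ (k - 1) = (N : ℝ) ^ (k - 2) * N := by
    rw [← pow_succ, hkk]
  rw [hNk, ← div_div]
  exact div_le_div_of_nonneg_right hmain hN0.le |>.trans (by push_cast; rfl)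
end

section
/- Let k ≥ 2 and (x_n)_{n≥1} ⊆ [0,1] be any sequence. For all scales s_1,…,s_{k-1} > 0 and every N ≥ 1 one has R_k^*(s_1,…,s_{k-1},N)^{k-1} ≤ R_k^*(s_1,N)·R_k^*(s_2,N)···R_k^*(s_{k-1},N). -/
open Finset Filter MeasureTheory
open scoped Classical ENNReal NNReal

/-! Grouping the `k`-tuples by their first index `m`, the count behind `R_k^*(s, N)` is
`∑ m, ∏ r, c_{s_r}(m)`, where `c_t(m) = #{j ≤ N : ‖x_m - x_j‖ ≤ t / N}`, while the count behind
`R_k^*(s_r, N)` is `∑ m, c_{s_r}(m) ^ (k - 1)`. The inequality is then Hölder's inequality for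
`k - 1` functions on `{1, …, N}`, all with exponent `k - 1`. -/

theorem ENNReal.sum_prod_pow_le_prod_sum_pow {ι α : Type*} [Fintype ι] (s : Finset α)
    (f : ι → α → ℝ≥0∞) :
    (∑ a ∈ s, ∏ i, f i a) ^ Fintype.card ι ≤ ∏ i, ∑ a ∈ s, f i a ^ Fintype.card ι := by
  set n := Fintype.card ι
  rcases eq_or_ne n 0 with hn | hn
  · simp [hn, Fintype.card_eq_zero_iff.mp hn]
  let _ : MeasurableSpace α := ⊤
  have holder := ENNReal.lintegral_prod_norm_pow_le (μ := Measure.count.restrict s) univ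
    (f := fun i a => f i a ^ n) (p := fun _ => (n : ℝ)⁻¹)
    (fun _ _ => measurable_from_top.aemeasurable) (by simp [n, hn]) (fun _ _ => by positivity)
  simp only [ENNReal.pow_rpow_inv_natCast hn, lintegral_finset, Measure.count_singleton,
    mul_one] at holder
  calc (∑ a ∈ s, ∏ i, f i a) ^ n ≤ (∏ i, (∑ a ∈ s, f i a ^ n) ^ (n : ℝ)⁻¹) ^ n := by gcongr
    _ = ∏ i, ∑ a ∈ s, f i a ^ n := by
      simp only [← Finset.prod_pow, ENNReal.rpow_inv_natCast_pow hn]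

theorem Nat.sum_prod_pow_le_prod_sum_pow {ι α : Type*} [Fintype ι] (s : Finset α)
    (f : ι → α → ℕ) :
    (∑ a ∈ s, ∏ i, f i a) ^ Fintype.card ι ≤ ∏ i, ∑ a ∈ s, f i a ^ Fintype.card ι := by
  exact_mod_cast ENNReal.sum_prod_pow_le_prod_sum_pow s fun i a => (f i a : ℝ≥0∞)

theorem Finset.card_filter_piFinset_fin_succ {β : Type*} {n : ℕ} (T : Finset β)
    (P : Fin n → β → β → Prop) :
    #{i ∈ Fintype.piFinset fun _ : Fin (n + 1) => T | ∀ r, P r (i 0) (i r.succ)} =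
      ∑ m ∈ T, ∏ r, #{j ∈ T | P r m j} := by
  simp_rw [← Fintype.card_piFinset, ← card_sigma]
  refine card_nbij' (fun i => ⟨i 0, Fin.tail i⟩) (fun p => Fin.cons p.1 p.2) ?_ ?_
    (fun i _ => Fin.cons_self_tail i) (fun _ _ => rfl)
  · intro i
    simp +contextual [Fin.tail]
  · rintro ⟨m, g⟩
    simp +contextual [Fin.forall_fin_succ]

theorem RcorrStar_succ_eq_sum_prod (x : ℕ → ℝ) (n N : ℕ) (s : Fin n → ℝ) :
    RcorrStar x (n + 1) N s =
      (∑ m ∈ Icc 1 N, ∏ r, #{j ∈ Icc 1 N | nint (x m - x j) ≤ s r / N} : ℕ) / N := by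
  rw [RcorrStar, ← card_filter_piFinset_fin_succ]
  -- `Fin (n + 1 - 1)` is `Fin n`, and `⟨0, _⟩`, `⟨r + 1, _⟩` are `0`, `r.succ`, definitionally
  rfl

theorem RcorrStar_pow_le_prod_RcorrStar_general
    (k : ℕ) (x : ℕ → ℝ)
    (s : Fin (k - 1) → ℝ) (N : ℕ) :
    RcorrStar x k N s ^ (k - 1) ≤ ∏ r : Fin (k - 1), RcorrStar x k N (fun _ => s r) := by
  cases k with
  | zero => simp
  | succ n =>
    simp only [RcorrStar_succ_eq_sum_prod, prod_const, card_univ, Fintype.card_fin, div_pow,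
      prod_div_distrib, Nat.add_sub_cancel]
    gcongr
    have holder := Nat.sum_prod_pow_le_prod_sum_pow (Icc 1 N)
      fun r m => #{j ∈ Icc 1 N | nint (x m - x j) ≤ s r / N}
    rw [Fintype.card_fin] at holder
    exact_mod_cast holder

/-- For any sequence in `[0,1]`, any `k ≥ 2`, scales `s₁,…,s_{k-1} > 0` and
`N ≥ 1`, `R_k^*(s₁,…,s_{k-1},N)^{k-1} ≤ R_k^*(s₁,N)·R_k^*(s₂,N)⋯R_k^*(s_{k-1},N)`. -/
theorem RcorrStar_pow_le_prod_RcorrStar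
    (k : ℕ) (hk : 2 ≤ k) (x : ℕ → ℝ) (hx : ∀ n, x n ∈ Set.Icc (0 : ℝ) 1)
    (s : Fin (k - 1) → ℝ) (hs : ∀ r, 0 < s r) (N : ℕ) (hN : 1 ≤ N) :
    RcorrStar x k N s ^ (k - 1) ≤ ∏ r : Fin (k - 1), RcorrStar x k N (fun _ => s r) :=
  RcorrStar_pow_le_prod_RcorrStar_general k x s N
end

section
/- Let k ≥ 2, (x_n)_{n≥1} ⊆ [0,1], and let G : [0,1] → ℝ be an asymptotic distribution function of (x_n) along a strictly increasing sequence (N_j) of positive integers. Let A = [u,v] ⊆ [0,1] be an interval with Lebesgue measure a = v − u > 0 and let b = G(v) − G(u) be its measure with respect to G. Then for every s > 0: liminf_{j→∞} C_k^*(A; s, N_j) ≥ (b^k / a^{k-1})·s^{2(k-1)}. -/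
open Finset Filter MeasureTheory
open scoped Classical ENNReal NNReal

/-- The interval modulo 1 with center `x₀` and radius `r`, viewed inside `[0,1)`. -/
def ballMod (x₀ r : ℝ) : Set ℝ := {y ∈ Set.Ico (0:ℝ) 1 | nint (y - x₀) ≤ r}

/-- `λ_N(i, j) = λ(B(x_i, s/(2N)) ∩ B(x_j, s/(2N)))`. -/
noncomputable def lamN (x : ℕ → ℝ) (s : ℝ) (N i j : ℕ) : ℝ :=
  (volume (ballMod (x i) (s / (2 * N)) ∩ ballMod (x j) (s / (2 * N)))).toReal

/-- The localized correlation quantity `C_k^*(A; s, N)`: the sum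
`N^{k-2}·∑ λ_N(i₁,i₂)⋯λ_N(i₁,i_k)` restricted to tuples with all points `x_{i_j}` in `A`. -/
noncomputable def CkStarLoc (x : ℕ → ℝ) (k N : ℕ) (A : Set ℝ) (s : ℝ) : ℝ :=
  (N : ℝ) ^ (k - 2) *
    ∑ i ∈ Fintype.piFinset (fun _ : Fin k => Finset.Icc 1 N),
      if ∀ j : Fin k, x (i j) ∈ A then
        ∏ r : Fin (k - 1),
          lamN x s N (i ⟨0, by have := r.2; omega⟩) (i ⟨r.1 + 1, by have := r.2; omega⟩)
      else 0

/-!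
Let `T` be the set of indices `n ≤ N` with `x n ∈ [u, v]`, `M = #T`, `r = s / (2N)` and
`L n = ∑_{j ∈ T} λ_N(n, j)`. Splitting off the first index of a tuple gives
`C_k^* = N^{k-2} ∑_{n ∈ T} (L n)^{k-1}`, and the power mean inequality bounds this by
`N^{k-2} (∑_n L n)^{k-1} / M^{k-2}`.

For `2r < 1` the projection of `ℝ` onto the circle is injective on `[x_n - r, x_n + r]` and maps
it into the arc `B(x_n, r)`, so `∑_{n,j} λ_N(n, j) ≥ ∑_{n,j} |I_n ∩ I_j|` for the real intervals
`I_n = [x_n - r, x_n + r]`. These all lie in `[u - r, v + r]`, and Cauchy–Schwarz applied to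
`∑_n 1_{I_n}` gives `∑_{n,j} |I_n ∩ I_j| ≥ (2rM)² / (v - u + 2r)`. Hence
`C_k^* ≥ (M/N)^k s^{2(k-1)} / (v - u + s/N)^{k-1}`, and `M/N` is at least the proportion of the
`x_n` in `(u, v]`, which tends to `G v - G u` along `N_j`.
-/

open Metric

lemma ballMod_eq_inter_preimage_closedBall (x₀ r : ℝ) :
    ballMod x₀ r = Set.Ico 0 1 ∩ (↑) ⁻¹' closedBall (x₀ : UnitAddCircle) r := by
  ext y
  simp [ballMod, nint, dist_eq_norm, ← QuotientAddGroup.mk_sub, UnitAddCircle.norm_eq]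

lemma volume_ballMod_inter (x y r : ℝ) :
    volume (ballMod x r ∩ ballMod y r) =
      volume (closedBall (x : UnitAddCircle) r ∩ closedBall (y : UnitAddCircle) r) := by
  rw [AddCircle.add_projection_respects_measure 1 0
      (measurableSet_closedBall.inter measurableSet_closedBall), zero_add,
    ballMod_eq_inter_preimage_closedBall, ballMod_eq_inter_preimage_closedBall,
    ← Set.inter_inter_distrib_left, ← Set.preimage_inter, Set.inter_comm]
  exact measure_congr ((ae_eq_refl _).inter Ico_ae_eq_Ioc)

lemma AddCircle.closedBall_subset_preimage_closedBall {T : ℝ} (x r : ℝ) :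
    closedBall x r ⊆ (↑) ⁻¹' closedBall (x : AddCircle T) r := by
  intro a ha
  rw [Set.mem_preimage, mem_closedBall, dist_eq_norm, ← QuotientAddGroup.mk_sub]
  exact QuotientAddGroup.norm_mk_le_norm.trans ha

lemma volume_closedBall_inter_le_volume_addCircle {T : ℝ} [Fact (0 < T)] {r : ℝ}
    (hr : r < T / 2) (x y : ℝ) :
    volume (closedBall x r ∩ closedBall y r) ≤
      volume (closedBall (x : AddCircle T) r ∩ closedBall (y : AddCircle T) r) := by
  rw [AddCircle.add_projection_respects_measure T (x - T / 2)
    (measurableSet_closedBall.inter measurableSet_closedBall)]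
  refine measure_mono (Set.subset_inter (Set.inter_subset_inter
    (AddCircle.closedBall_subset_preimage_closedBall x r)
    (AddCircle.closedBall_subset_preimage_closedBall y r)) ?_)
  intro a ⟨ha, _⟩
  rw [mem_closedBall, Real.dist_eq, abs_le] at ha
  constructor <;> linarith

lemma Fintype.filter_forall_piFinset_const {ι α : Type*} [Fintype ι] [DecidableEq ι]
    (t : Finset α) (p : α → Prop) [DecidablePred p] :
    (Fintype.piFinset fun _ : ι => t).filter (fun i => ∀ j, p (i j)) =
      Fintype.piFinset fun _ : ι => t.filter p := by
  ext i
  simp [Fintype.mem_piFinset, forall_and]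

lemma sum_piFinset_prod_apply_zero_apply_succ {α R : Type*} [CommSemiring R] (t : Finset α)
    (f : α → α → R) (l : ℕ) :
    ∑ i ∈ Fintype.piFinset (fun _ : Fin (l + 1) => t), ∏ r : Fin l, f (i 0) (i r.succ) =
      ∑ n ∈ t, (∑ j ∈ t, f n j) ^ l := by
  have h := Finset.filter_piFinset_eq_map_consEquiv (fun _ : Fin (l + 1) => t) (fun _ => True)
  simp only [Finset.filter_true] at h
  rw [h, Finset.sum_map, Finset.sum_product]
  refine Finset.sum_congr rfl fun n _ => ?_
  simp only [Function.Embedding.coeFn_mk, Fin.consEquiv_apply, Fin.cons_zero, Fin.cons_succ]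
  exact (Finset.sum_prod_piFinset t fun _ j => f n j).trans (Finset.prod_const _ |>.trans (by simp))

lemma CkStarLoc_eq_sum_pow (x : ℕ → ℝ) (l N : ℕ) (A : Set ℝ) [DecidablePred (x · ∈ A)]
    (s : ℝ) :
    CkStarLoc x (l + 2) N A s = (N : ℝ) ^ l *
      ∑ n ∈ (Finset.Icc 1 N).filter (x · ∈ A),
        (∑ j ∈ (Finset.Icc 1 N).filter (x · ∈ A), lamN x s N n j) ^ (l + 1) := by
  rw [CkStarLoc, ← sum_piFinset_prod_apply_zero_apply_succ,
    ← Fintype.filter_forall_piFinset_const, Finset.sum_filter]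
  refine congrArg₂ _ rfl (Finset.sum_congr rfl fun i _ => ?_)
  split_ifs <;> rfl

lemma sq_sum_measure_le_sum_sum_measure_inter_mul_measure_univ {α ι : Type*} [MeasurableSpace α]
    (μ : Measure α) (T : Finset ι) {B : ι → Set α} (hB : ∀ i ∈ T, MeasurableSet (B i)) :
    (∑ i ∈ T, μ (B i)) ^ 2 ≤ (∑ i ∈ T, ∑ j ∈ T, μ (B i ∩ B j)) * μ Set.univ := by
  set F : α → ℝ≥0∞ := fun y => ∑ i ∈ T, (B i).indicator 1 y
  have hF : Measurable F := Finset.measurable_sum _ fun i hi => measurable_one.indicator (hB i hi)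
  have hF_int : ∫⁻ y, F y ∂μ = ∑ i ∈ T, μ (B i) := by
    rw [lintegral_finsetSum _ fun i hi => measurable_one.indicator (hB i hi)]
    exact Finset.sum_congr rfl fun i hi => lintegral_indicator_one (hB i hi)
  have hF_sq : ∫⁻ y, F y ^ (2 : ℝ) ∂μ = ∑ i ∈ T, ∑ j ∈ T, μ (B i ∩ B j) := by
    have hBB : ∀ i ∈ T, ∀ j ∈ T, MeasurableSet (B i ∩ B j) := fun i hi j hj =>
      (hB i hi).inter (hB j hj)
    have hF_sq_eq (y : α) :
        F y ^ (2 : ℝ) = ∑ i ∈ T, ∑ j ∈ T, (B i ∩ B j).indicator 1 y := by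
      simp [F, sq, Finset.sum_mul_sum, Set.inter_indicator_one]
    rw [lintegral_congr fun y => hF_sq_eq y, lintegral_finsetSum _ fun i hi =>
      Finset.measurable_sum _ fun j hj => measurable_one.indicator (hBB i hi j hj)]
    refine Finset.sum_congr rfl fun i hi => ?_
    rw [lintegral_finsetSum _ fun j hj => measurable_one.indicator (hBB i hi j hj)]
    exact Finset.sum_congr rfl fun j hj => lintegral_indicator_one (hBB i hi j hj)
  have hHolder := ENNReal.lintegral_mul_le_Lp_mul_Lq μ Real.HolderConjugate.two_two
    hF.aemeasurable aemeasurable_const (g := 1)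
  simp only [mul_one, Pi.one_apply, ENNReal.one_rpow, lintegral_const, one_mul] at hHolder
  rw [hF_int, hF_sq] at hHolder
  calc (∑ i ∈ T, μ (B i)) ^ 2
      ≤ ((∑ i ∈ T, ∑ j ∈ T, μ (B i ∩ B j)) ^ (1 / 2 : ℝ) *
          μ Set.univ ^ (1 / 2 : ℝ)) ^ 2 := by
        gcongr
    _ = (∑ i ∈ T, ∑ j ∈ T, μ (B i ∩ B j)) * μ Set.univ := by
        rw [mul_pow, ← ENNReal.rpow_two, ← ENNReal.rpow_two, ← ENNReal.rpow_mul,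
          ← ENNReal.rpow_mul]
        norm_num

lemma sq_sum_measure_le_sum_sum_measure_inter_mul {α ι : Type*} [MeasurableSpace α]
    (μ : Measure α) (T : Finset ι) {B : ι → Set α} {W : Set α}
    (hB : ∀ i ∈ T, MeasurableSet (B i)) (hBW : ∀ i ∈ T, B i ⊆ W) :
    (∑ i ∈ T, μ (B i)) ^ 2 ≤ (∑ i ∈ T, ∑ j ∈ T, μ (B i ∩ B j)) * μ W := by
  have h := sq_sum_measure_le_sum_sum_measure_inter_mul_measure_univ (μ.restrict W) T hB
  rwa [Measure.restrict_apply_univ,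
    Finset.sum_congr rfl fun i hi => Measure.restrict_eq_self μ (hBW i hi),
    Finset.sum_congr rfl fun i hi => Finset.sum_congr rfl fun j _ =>
      Measure.restrict_eq_self μ (Set.inter_subset_left.trans (hBW i hi))] at h

lemma AddCircle.sq_card_mul_le_sum_sum_volume_closedBall_inter {ι : Type*} {P : ℝ} [Fact (0 < P)]
    (T : Finset ι) (x : ι → ℝ) {u v r : ℝ} (hr₀ : 0 ≤ r) (hr : r < P / 2)
    (hx : ∀ i ∈ T, x i ∈ Set.Icc u v) :
    ENNReal.ofReal ((T.card * (2 * r)) ^ 2) ≤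
      (∑ i ∈ T, ∑ j ∈ T,
        volume (closedBall (x i : AddCircle P) r ∩ closedBall (x j : AddCircle P) r)) *
          ENNReal.ofReal (v - u + 2 * r) := by
  have hBW : ∀ i ∈ T, closedBall (x i) r ⊆ Set.Icc (u - r) (v + r) := fun i hi => by
    rw [Real.closedBall_eq_Icc]
    exact Set.Icc_subset_Icc (by linarith [(hx i hi).1]) (by linarith [(hx i hi).2])
  calc ENNReal.ofReal ((T.card * (2 * r)) ^ 2)
      = (∑ i ∈ T, volume (closedBall (x i) r)) ^ 2 := by
        simp only [Real.volume_closedBall, Finset.sum_const, nsmul_eq_mul]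
        rw [← ENNReal.ofReal_natCast, ← ENNReal.ofReal_mul (by positivity),
          ← ENNReal.ofReal_pow (by positivity)]
    _ ≤ (∑ i ∈ T, ∑ j ∈ T, volume (closedBall (x i) r ∩ closedBall (x j) r)) *
          volume (Set.Icc (u - r) (v + r)) :=
        sq_sum_measure_le_sum_sum_measure_inter_mul _ T (fun _ _ => measurableSet_closedBall) hBW
    _ ≤ _ := by
        rw [Real.volume_Icc, show v + r - (u - r) = v - u + 2 * r by ring]
        gcongr with i _ j _
        exact volume_closedBall_inter_le_volume_addCircle hr _ _

lemma sq_card_mul_le_sum_sum_lamN_mul (x : ℕ → ℝ) (T : Finset ℕ) {u v s : ℝ} {N : ℕ}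
    (huv : u ≤ v) (hs : 0 ≤ s) (hsN : s < N) (hx : ∀ n ∈ T, x n ∈ Set.Icc u v) :
    ((T.card : ℝ) * (s / N)) ^ 2 ≤
      (∑ n ∈ T, ∑ j ∈ T, lamN x s N n j) * (v - u + s / N) := by
  have hN : (0 : ℝ) < N := hs.trans_lt hsN
  have hr : s / (2 * N) < (1 : ℝ) / 2 := by
    rw [div_lt_div_iff₀ (by positivity) two_pos]
    linarith
  have h := AddCircle.sq_card_mul_le_sum_sum_volume_closedBall_inter T x (by positivity) hr hx
  have hlam : ∀ n j, volume (closedBall (x n : UnitAddCircle) (s / (2 * N)) ∩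
      closedBall (x j : UnitAddCircle) (s / (2 * N))) = ENNReal.ofReal (lamN x s N n j) := by
    intro n j
    rw [lamN, volume_ballMod_inter, ENNReal.ofReal_toReal (measure_ne_top _ _)]
  have hlam_nonneg : ∀ n j, 0 ≤ lamN x s N n j := fun n j => ENNReal.toReal_nonneg
  have hL_nonneg : ∀ n, 0 ≤ ∑ j ∈ T, lamN x s N n j := fun n =>
    Finset.sum_nonneg fun _ _ => hlam_nonneg _ _
  simp_rw [hlam, ← ENNReal.ofReal_sum_of_nonneg fun _ _ => hlam_nonneg _ _,
    ← ENNReal.ofReal_sum_of_nonneg fun _ _ => hL_nonneg _,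
    ← ENNReal.ofReal_mul (Finset.sum_nonneg fun _ _ => hL_nonneg _),
    show 2 * (s / (2 * N)) = s / N by field_simp] at h
  have ha : 0 ≤ v - u + s / N := by linarith [div_nonneg hs hN.le]
  exact (ENNReal.ofReal_le_ofReal_iff
    (mul_nonneg (Finset.sum_nonneg fun _ _ => hL_nonneg _) ha)).mp h

lemma card_div_pow_mul_le_CkStarLoc_Icc (k : ℕ) (hk : 2 ≤ k) (x : ℕ → ℝ) {u v s : ℝ}
    {N : ℕ} (huv : u ≤ v) (hs : 0 < s) (hsN : s < N) :
    ((((Finset.Icc 1 N).filter (x · ∈ Set.Icc u v)).card : ℝ) / N) ^ k /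
        (v - u + s / N) ^ (k - 1) * s ^ (2 * (k - 1)) ≤ CkStarLoc x k N (Set.Icc u v) s := by
  obtain ⟨l, rfl⟩ : ∃ l, k = l + 2 := ⟨k - 2, by omega⟩
  rw [CkStarLoc_eq_sum_pow, show l + 2 - 1 = l + 1 by omega]
  set T := (Finset.Icc 1 N).filter (x · ∈ Set.Icc u v)
  set L : ℕ → ℝ := fun n => ∑ j ∈ T, lamN x s N n j
  have hN : (0 : ℝ) < N := hs.trans hsN
  have ha : 0 < v - u + s / N := by linarith [div_pos hs hN]
  have hL : ∀ n ∈ T, 0 ≤ L n := fun n _ => Finset.sum_nonneg fun _ _ => ENNReal.toReal_nonneg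
  rcases T.eq_empty_or_nonempty with hT | hT
  · simp [hT]
  have hM : (0 : ℝ) < T.card := by exact_mod_cast hT.card_pos
  have hcs : ((T.card : ℝ) * (s / N)) ^ 2 ≤ (∑ n ∈ T, L n) * (v - u + s / N) :=
    sq_card_mul_le_sum_sum_lamN_mul x T huv hs.le hsN fun n hn => (Finset.mem_filter.mp hn).2
  have hpow : (∑ n ∈ T, L n) ^ (l + 1) / T.card ^ l ≤ ∑ n ∈ T, L n ^ (l + 1) :=
    pow_sum_div_card_le_sum_pow hL l
  calc ((T.card : ℝ) / N) ^ (l + 2) / (v - u + s / N) ^ (l + 1) * s ^ (2 * (l + 1))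
      = N ^ l * ((((T.card : ℝ) * (s / N)) ^ 2) ^ (l + 1) / (v - u + s / N) ^ (l + 1)) /
          T.card ^ l := by
        generalize v - u + s / N = a at ha ⊢
        simp only [div_pow, mul_pow, ← pow_mul]
        field_simp
        ring
    _ ≤ N ^ l * (((∑ n ∈ T, L n) * (v - u + s / N)) ^ (l + 1) / (v - u + s / N) ^ (l + 1)) /
          T.card ^ l := by gcongr
    _ = N ^ l * ((∑ n ∈ T, L n) ^ (l + 1) / T.card ^ l) := by
        rw [mul_pow, mul_div_assoc, mul_div_cancel_right₀ _ (by positivity)]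
    _ ≤ N ^ l * ∑ n ∈ T, L n ^ (l + 1) := by gcongr

lemma card_filter_le_sub_card_filter_le_le_card_filter_mem_Icc {ι α : Type*} [LinearOrder α]
    (S : Finset ι) (f : ι → α) (u v : α) :
    ((S.filter (f · ≤ v)).card : ℝ) - (S.filter (f · ≤ u)).card ≤
      (S.filter (f · ∈ Set.Icc u v)).card := by
  rw [sub_le_iff_le_add']
  norm_cast
  refine (Finset.card_le_card fun n hn => ?_).trans (Finset.card_union_le _ _)
  simp only [Finset.mem_union, Finset.mem_filter, Set.mem_Icc] at hn ⊢
  by_cases h : f n ≤ u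
  · exact Or.inl ⟨hn.1, h⟩
  · exact Or.inr ⟨hn.1, le_of_not_ge h, hn.2⟩

lemma card_sub_div_pow_mul_le_CkStarLoc_Icc (k : ℕ) (hk : 2 ≤ k) (x : ℕ → ℝ) {u v s : ℝ}
    {N : ℕ} (huv : u ≤ v) (hs : 0 < s) (hsN : s < N) :
    (((((Finset.Icc 1 N).filter fun n => x n ≤ v).card : ℝ) -
        ((Finset.Icc 1 N).filter fun n => x n ≤ u).card) / N) ^ k /
        (v - u + s / N) ^ (k - 1) * s ^ (2 * (k - 1)) ≤ CkStarLoc x k N (Set.Icc u v) s := by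
  refine le_trans ?_ (card_div_pow_mul_le_CkStarLoc_Icc k hk x huv hs hsN)
  have hcount : (((Finset.Icc 1 N).filter fun n => x n ≤ u).card : ℝ) ≤
      ((Finset.Icc 1 N).filter fun n => x n ≤ v).card := by
    exact_mod_cast Finset.card_le_card
      (Finset.monotone_filter_right _ fun n _ (h : x n ≤ u) => h.trans huv)
  have : 0 < v - u + s / N := by linarith [div_pos hs (hs.trans hsN)]
  gcongr
  exact card_filter_le_sub_card_filter_le_le_card_filter_mem_Icc _ x u v

theorem liminf_CkStarLoc_ge_general
    (k : ℕ) (hk : 2 ≤ k) (x : ℕ → ℝ)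
    (Nj : ℕ → ℕ) (hmono : StrictMono Nj)
    (G : ℝ → ℝ)
    (hG : ∀ t ∈ Set.Icc (0 : ℝ) 1,
      Tendsto (fun j : ℕ =>
          (((Finset.Icc 1 (Nj j)).filter fun n => x n ≤ t).card : ℝ) / (Nj j))
        atTop (nhds (G t)))
    (u v : ℝ) (hu : 0 ≤ u) (huv : u < v) (hv : v ≤ 1) :
    ∀ s : ℝ, 0 < s →
      ENNReal.ofReal ((G v - G u) ^ k / (v - u) ^ (k - 1) * s ^ (2 * (k - 1))) ≤
        Filter.liminf
          (fun j : ℕ => ENNReal.ofReal (CkStarLoc x k (Nj j) (Set.Icc u v) s)) atTop := by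
  intro s hs
  set c : ℕ → ℝ := fun j => ((((Finset.Icc 1 (Nj j)).filter fun n => x n ≤ v).card : ℝ) -
    ((Finset.Icc 1 (Nj j)).filter fun n => x n ≤ u).card) / Nj j
  have hc : Tendsto c atTop (nhds (G v - G u)) := by
    simpa only [c, sub_div] using (hG v ⟨by linarith, hv⟩).sub (hG u ⟨hu, by linarith⟩)
  have hN : Tendsto (fun j => (Nj j : ℝ)) atTop atTop :=
    tendsto_natCast_atTop_atTop.comp hmono.tendsto_atTop
  have hlim : Tendsto (fun j => c j ^ k / (v - u + s / Nj j) ^ (k - 1) * s ^ (2 * (k - 1)))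
      atTop (nhds ((G v - G u) ^ k / (v - u) ^ (k - 1) * s ^ (2 * (k - 1)))) := by
    have h : Tendsto (fun j => v - u + s / Nj j) atTop (nhds (v - u)) := by
      simpa using tendsto_const_nhds.add (tendsto_const_nhds.div_atTop hN)
    exact ((hc.pow k).div (h.pow _) (pow_ne_zero _ (sub_ne_zero.2 huv.ne'))).mul_const _
  have hbound : ∀ᶠ j in atTop, c j ^ k / (v - u + s / Nj j) ^ (k - 1) * s ^ (2 * (k - 1)) ≤
      CkStarLoc x k (Nj j) (Set.Icc u v) s :=
    (hN.eventually_gt_atTop s).mono fun j hj =>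
      card_sub_div_pow_mul_le_CkStarLoc_Icc k hk x huv.le hs hj
  calc ENNReal.ofReal ((G v - G u) ^ k / (v - u) ^ (k - 1) * s ^ (2 * (k - 1)))
      = liminf (fun j => ENNReal.ofReal (c j ^ k / (v - u + s / Nj j) ^ (k - 1) *
          s ^ (2 * (k - 1)))) atTop :=
        ((ENNReal.continuous_ofReal.tendsto _).comp hlim).liminf_eq.symm
    _ ≤ _ := liminf_le_liminf (hbound.mono fun j hj => ENNReal.ofReal_le_ofReal hj)

/-- If `G` is an asymptotic distribution function of `(x_n)` along `(N_j)`,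
`A = [u,v] ⊆ [0,1]` with Lebesgue measure `a = v - u > 0` and `G`-measure `b = G v - G u`, then
for every `s > 0`, `liminf_j C_k^*(A; s, N_j) ≥ (b^k/a^{k-1})·s^{2(k-1)}`. -/
theorem liminf_CkStarLoc_ge
    (k : ℕ) (hk : 2 ≤ k) (x : ℕ → ℝ) (hx : ∀ n, x n ∈ Set.Icc (0 : ℝ) 1)
    (Nj : ℕ → ℕ) (hmono : StrictMono Nj) (hpos : ∀ j, 1 ≤ Nj j)
    (G : ℝ → ℝ)
    (hG : ∀ t ∈ Set.Icc (0 : ℝ) 1,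
      Tendsto (fun j : ℕ =>
          (((Finset.Icc 1 (Nj j)).filter fun n => x n ≤ t).card : ℝ) / (Nj j))
        atTop (nhds (G t)))
    (u v : ℝ) (hu : 0 ≤ u) (huv : u < v) (hv : v ≤ 1) :
    ∀ s : ℝ, 0 < s →
      ENNReal.ofReal ((G v - G u) ^ k / (v - u) ^ (k - 1) * s ^ (2 * (k - 1))) ≤
        Filter.liminf
          (fun j : ℕ => ENNReal.ofReal (CkStarLoc x k (Nj j) (Set.Icc u v) s)) atTop :=
  liminf_CkStarLoc_ge_general k hk x Nj hmono G hG u v hu huv hv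
end

section
/- Let k ≥ 2 and suppose the sequence (x_n)_{n≥1} ⊆ [0,1] has Poissonian k-th order correlations. Then for every t ∈ [0,1] and every s > 0, lim_{N→∞} (1/N)·#{n ≤ N : ‖x_n − t‖ ≤ s/(2N)} = 0, where ‖x‖ denotes the distance from x to the nearest integer. -/
open Finset Filter MeasureTheory
open scoped Classical ENNReal NNReal

/-! If `A` of the first `N` points lie within `s/(2N)` of `t`, they lie pairwise within `s/N` of
each other, so all `A(A-1)⋯(A-k+1)` injective `k`-tuples of their indices are counted by the
correlation box `[-s, s]^(k-1)`. Poissonian correlations make that count `O(N)`, and for `k ≥ 2`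
the falling factorial dominates `(A - k)^2`; hence `A = O(√N) = o(N)`. -/

open Topology

lemma nint_eq_norm (x : ℝ) : nint x = ‖(x : UnitAddCircle)‖ := by
  rw [nint, UnitAddCircle.norm_eq]

lemma nint_sub_le (u v : ℝ) : nint (u - v) ≤ nint u + nint v := by
  simpa only [nint_eq_norm, AddCircle.coe_sub] using norm_sub_le (u : UnitAddCircle) v

lemma abs_sdist (z : ℝ) : |sdist z| = nint z := by
  rw [nint, abs_sub_round_eq_min, sdist]
  split_ifs with h
  · rw [abs_of_nonneg (Int.fract_nonneg z), min_eq_left (by linarith)]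
  · rw [abs_of_nonpos (by linarith [Int.fract_lt_one z]), min_eq_right (by linarith), neg_sub]

lemma descFactorial_card_le_corrBoxCount (x : ℕ → ℝ) (k N : ℕ) {S : Finset ℕ}
    (hS : S ⊆ Icc 1 N) {s : ℝ} (hclose : ∀ u ∈ S, ∀ v ∈ S, nint (x u - x v) ≤ s / N) :
    S.card.descFactorial k ≤ corrBoxCount x k N (fun _ => -s) (fun _ => s) := by
  have hemb : S.card.descFactorial k = (univ : Finset (Fin k ↪ S)).card := by
    simp [Fintype.card_embedding_eq]
  rw [hemb, corrBoxCount]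
  refine card_le_card_of_injOn (fun e j => (e j : ℕ)) (fun e _ => ?_)
    (fun e _ e' _ h => DFunLike.ext _ _ fun j => Subtype.ext (congrFun h j))
  refine mem_filter.2 ⟨Fintype.mem_piFinset.2 fun j => hS (e j).2,
    fun i j h => e.injective (Subtype.ext h), fun r => ?_⟩
  set u := e ⟨0, by have := r.2; omega⟩
  set v := e ⟨r.1 + 1, by have := r.2; omega⟩
  have hN : (0 : ℝ) < N := Nat.cast_pos.2 ((mem_Icc.1 (hS u.2)).1.trans (mem_Icc.1 (hS u.2)).2)
  have habs : |(N : ℝ) * sdist (x u - x v)| ≤ s := by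
    rw [abs_mul, Nat.abs_cast, abs_sdist, ← le_div_iff₀' hN]
    exact hclose u u.2 v v.2
  exact abs_le.1 habs

lemma Nat.sub_sq_le_descFactorial {k : ℕ} (hk : 2 ≤ k) (n : ℕ) :
    (n - k) ^ 2 ≤ n.descFactorial k := by
  rcases Nat.eq_zero_or_pos (n + 1 - k) with h | h
  · simp [show n - k = 0 by omega]
  calc (n - k) ^ 2 ≤ (n + 1 - k) ^ 2 := Nat.pow_le_pow_left (by omega) 2
    _ ≤ (n + 1 - k) ^ k := Nat.pow_le_pow_right h hk
    _ ≤ n.descFactorial k := Nat.pow_sub_le_descFactorial n k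

lemma Nat.cast_le_add_sqrt_descFactorial {k : ℕ} (hk : 2 ≤ k) (n : ℕ) :
    (n : ℝ) ≤ k + √(n.descFactorial k) := by
  have hsq : ((n - k : ℕ) : ℝ) ^ 2 ≤ n.descFactorial k := by
    exact_mod_cast Nat.sub_sq_le_descFactorial hk n
  have hsub : (n : ℝ) ≤ (n - k : ℕ) + k := by exact_mod_cast le_tsub_add
  linarith [Real.le_sqrt_of_sq_le hsq]

lemma tendsto_div_atTop_zero_of_descFactorial_div_le {A : ℕ → ℕ} {k : ℕ} (hk : 2 ≤ k) {C : ℝ}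
    (h : ∀ᶠ N in atTop, ((A N).descFactorial k : ℝ) / N ≤ C) :
    Tendsto (fun N => (A N : ℝ) / N) atTop (𝓝 0) := by
  have hupper : Tendsto (fun N : ℕ => k / N + √(C / N)) atTop (𝓝 0) := by
    simpa using (tendsto_const_div_atTop_nhds_zero_nat (k : ℝ)).add
      ((Real.continuous_sqrt.tendsto 0).comp (tendsto_const_div_atTop_nhds_zero_nat C))
  refine tendsto_of_tendsto_of_tendsto_of_le_of_le' tendsto_const_nhds hupper
    (Eventually.of_forall fun N => by positivity) ?_
  filter_upwards [h, eventually_gt_atTop 0] with N hC hN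
  have hN' : (0 : ℝ) < N := by exact_mod_cast hN
  set D : ℝ := (((A N).descFactorial k : ℕ) : ℝ)
  have hsqrt : √D / N ≤ √(C / N) := by
    refine Real.le_sqrt_of_sq_le ?_
    rw [div_pow, Real.sq_sqrt (by positivity), sq, ← div_div]
    exact div_le_div_of_nonneg_right hC hN'.le
  calc (A N : ℝ) / N ≤ (k + √D) / N :=
        div_le_div_of_nonneg_right (Nat.cast_le_add_sqrt_descFactorial hk (A N)) hN'.le
    _ = k / N + √D / N := add_div _ _ _
    _ ≤ k / N + √(C / N) := by gcongr

theorem poissonian_implies_no_concentration_general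
    (k : ℕ) (hk : 2 ≤ k) (x : ℕ → ℝ)
    (hP : HasPoissonianCorr x k) :
    ∀ t ∈ Set.Icc (0 : ℝ) 1, ∀ s : ℝ, 0 < s →
      Tendsto (fun N : ℕ =>
          (((Finset.Icc 1 N).filter fun n => nint (x n - t) ≤ s / (2 * N)).card : ℝ) / N)
        atTop (nhds 0) := by
  intro t _ s hs
  have hbox := hP (fun _ => -s) (fun _ => s) fun _ => by linarith
  refine tendsto_div_atTop_zero_of_descFactorial_div_le hk (C := ∏ _r : Fin (k - 1), (s - -s) + 1)
    ((hbox.eventually_le_const (lt_add_one _)).mono fun N hN => ?_)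
  refine le_trans (div_le_div_of_nonneg_right ?_ N.cast_nonneg) hN
  refine Nat.cast_le.2 (descFactorial_card_le_corrBoxCount x k N (filter_subset _ _) ?_)
  intro u hu v hv
  have hsum : nint (x u - x v) ≤ nint (x u - t) + nint (x v - t) := by
    simpa only [sub_sub_sub_cancel_right] using nint_sub_le (x u - t) (x v - t)
  have hhalf : s / (2 * N) + s / (2 * N) = s / N := by ring
  linarith [(mem_filter.1 hu).2, (mem_filter.1 hv).2]

/-- If `(x_n)` has Poissonian `k`-th order correlations, then for every
`t ∈ [0,1]` and `s > 0`, the proportion of `n ≤ N` with `‖x_n − t‖ ≤ s/(2N)` tends to `0`. -/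
theorem poissonian_implies_no_concentration
    (k : ℕ) (hk : 2 ≤ k) (x : ℕ → ℝ) (hx : ∀ n, x n ∈ Set.Icc (0 : ℝ) 1)
    (hP : HasPoissonianCorr x k) :
    ∀ t ∈ Set.Icc (0 : ℝ) 1, ∀ s : ℝ, 0 < s →
      Tendsto (fun N : ℕ =>
          (((Finset.Icc 1 N).filter fun n => nint (x n - t) ≤ s / (2 * N)).card : ℝ) / N)
        atTop (nhds 0) :=
  poissonian_implies_no_concentration_general k hk x hP
end

section
/- Let k ≥ 2 and s > 0, and define g_s^{(k)} : ℝ^{k-1} → ℝ by g_s^{(k)}(y_1,…,y_{k-1}) = max(0, s − max_{1≤i<k} max(y_i, 0) − max_{1≤i<k} max(−y_i, 0)). Then ∫_{ℝ^{k-1}} g_s^{(k)}(y_1,…,y_{k-1}) dy_1···dy_{k-1} = s^k. -/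
open Finset Filter MeasureTheory
open scoped Classical ENNReal NNReal

/-- The test function `g_s^{(k)}(y) = {s − max_i {y_i}⁺ − max_i {−y_i}⁺}⁺` on `ℝ^{k-1}`. -/
noncomputable def gTest (k : ℕ) (s : ℝ) (y : Fin (k - 1) → ℝ) : ℝ :=
  max 0 (s - (Finset.univ.fold max 0 fun i : Fin (k - 1) => max (y i) 0)
            - (Finset.univ.fold max 0 fun i : Fin (k - 1) => max (-(y i)) 0))

/-!
`max yᵢ⁺ + max (-yᵢ)⁺` is the length of the smallest interval containing `0` and every `yᵢ`, so
`g_s(y)` is the length of the set of `c ∈ [-s, 0]` with all `yᵢ ∈ [c, c + s]`. Hence `∫ g_s` is the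
volume of `{(y, c) | -s ≤ c ≤ 0, y ∈ [c, c + s]^{k-1}}`, and slicing this set at fixed `c` instead
gives `s · s^{k-1}`.
-/

theorem Continuous.finset_fold_max {X ι : Type*} [TopologicalSpace X] (t : Finset ι)
    {f : ι → X → ℝ} (hf : ∀ i, Continuous (f i)) (b : ℝ) :
    Continuous fun x => t.fold max b fun i => f i x := by
  classical
  induction t using Finset.induction_on with
  | empty => exact continuous_const
  | insert _ _ h ih =>
    simp only [Finset.fold_insert h]
    exact (hf _).max ih

section SlidingCubes

variable (ι : Type*)

def slidingCubes (s : ℝ) : Set ((ι → ℝ) × ℝ) :=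
  {p | p.2 ∈ Set.Icc (-s) 0 ∧ ∀ i, p.1 i ∈ Set.Icc p.2 (p.2 + s)}

theorem isClosed_slidingCubes (s : ℝ) : IsClosed (slidingCubes ι s) := by
  simp only [slidingCubes, Set.ofPred_and, Set.ofPred_forall]
  refine (isClosed_Icc.preimage continuous_snd).inter (isClosed_iInter fun i => ?_)
  exact (isClosed_le continuous_snd ((continuous_apply i).comp continuous_fst)).inter
    (isClosed_le ((continuous_apply i).comp continuous_fst) (continuous_snd.add continuous_const))

variable [Fintype ι]

-- `gTest k s` is `gTestOn (Fin (k - 1)) s` by definition.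
noncomputable def gTestOn (s : ℝ) (y : ι → ℝ) : ℝ :=
  max 0 (s - (univ.fold max 0 fun i => max (y i) 0) - univ.fold max 0 fun i => max (-y i) 0)

theorem continuous_gTestOn (s : ℝ) : Continuous (gTestOn ι s) :=
  continuous_const.max <| (continuous_const.sub <|
    .finset_fold_max _ (fun i => (continuous_apply i).max continuous_const) 0).sub <|
    .finset_fold_max _ (fun i => (continuous_apply i).neg.max continuous_const) 0

variable {ι}

theorem gTestOn_nonneg (s : ℝ) (y : ι → ℝ) : 0 ≤ gTestOn ι s y :=
  le_max_left _ _

theorem mk_mem_slidingCubes_iff (s : ℝ) (y : ι → ℝ) (c : ℝ) :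
    (y, c) ∈ slidingCubes ι s ↔
      c ∈ Set.Icc ((univ.fold max 0 fun i => max (y i) 0) - s)
        (-univ.fold max 0 fun i => max (-y i) 0) := by
  simp only [slidingCubes, Set.mem_ofPred_eq, Set.mem_Icc, sub_le_iff_le_add, le_neg,
    fold_max_le, max_le_iff, mem_univ, true_implies]
  constructor
  · rintro ⟨⟨hsc, hc⟩, hy⟩
    exact ⟨⟨by linarith, fun i => ⟨(hy i).2, by linarith⟩⟩,
      by linarith, fun i => ⟨by linarith [(hy i).1], by linarith⟩⟩
  · rintro ⟨⟨hsc, hy⟩, hc, hy'⟩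
    exact ⟨⟨by linarith, by linarith⟩, fun i => ⟨by linarith [(hy' i).1], (hy i).1⟩⟩

theorem volume_slidingCubes_slice_left (s : ℝ) (y : ι → ℝ) :
    volume (Prod.mk y ⁻¹' slidingCubes ι s) = ENNReal.ofReal (gTestOn ι s y) := by
  rw [show Prod.mk y ⁻¹' slidingCubes ι s = _ from Set.ext (mk_mem_slidingCubes_iff s y),
    Real.volume_Icc, gTestOn, ENNReal.ofReal_max, ENNReal.ofReal_zero, zero_max]
  ring_nf

theorem volume_slidingCubes_slice_right (s c : ℝ) :
    volume ((·, c) ⁻¹' slidingCubes ι s) =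
      (Set.Icc (-s) 0).indicator (fun _ => ENNReal.ofReal s ^ Fintype.card ι) c := by
  by_cases hc : c ∈ Set.Icc (-s) 0
  · have hslice : (·, c) ⁻¹' slidingCubes ι s = Set.univ.pi fun _ => Set.Icc c (c + s) := by
      ext y
      simp only [slidingCubes, Set.mem_preimage, Set.mem_ofPred_eq, Set.mem_univ_pi, hc, true_and]
    rw [hslice, volume_pi_pi, Set.indicator_of_mem hc]
    simp [Real.volume_Icc]
  · have hslice : (·, c) ⁻¹' slidingCubes ι s = ∅ :=
      Set.eq_empty_of_forall_notMem fun _ hy => hc hy.1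
    rw [hslice, measure_empty, Set.indicator_of_notMem hc]

theorem lintegral_gTestOn_eq_volume_slidingCubes (s : ℝ) :
    ∫⁻ y, ENNReal.ofReal (gTestOn ι s y) = volume (slidingCubes ι s) := by
  simp_rw [Measure.volume_eq_prod, Measure.prod_apply (isClosed_slidingCubes ι s).measurableSet,
    volume_slidingCubes_slice_left]

theorem volume_slidingCubes {s : ℝ} (hs : 0 ≤ s) :
    volume (slidingCubes ι s) = ENNReal.ofReal (s ^ (Fintype.card ι + 1)) := by
  simp_rw [Measure.volume_eq_prod,
    Measure.prod_apply_symm (isClosed_slidingCubes ι s).measurableSet,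
    volume_slidingCubes_slice_right]
  rw [lintegral_indicator measurableSet_Icc, setLIntegral_const, Real.volume_Icc, sub_neg_eq_add,
    zero_add, ← pow_succ, ENNReal.ofReal_pow hs]

theorem integral_gTestOn {s : ℝ} (hs : 0 ≤ s) :
    ∫ y, gTestOn ι s y = s ^ (Fintype.card ι + 1) := by
  rw [integral_eq_lintegral_of_nonneg_ae (.of_forall (gTestOn_nonneg s))
      (continuous_gTestOn ι s).aestronglyMeasurable,
    lintegral_gTestOn_eq_volume_slidingCubes, volume_slidingCubes hs,
    ENNReal.toReal_ofReal (by positivity)]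

end SlidingCubes

/-- For `k ≥ 2` and `s > 0`, the integral of `g_s^{(k)}` over `ℝ^{k-1}`
equals `s^k`. -/
theorem integral_gTest_eq_pow
    (k : ℕ) (hk : 2 ≤ k) (s : ℝ) (hs : 0 < s) :
    ∫ y : Fin (k - 1) → ℝ, gTest k s y = s ^ k := by
  have h := integral_gTestOn (ι := Fin (k - 1)) hs.le
  rwa [Fintype.card_fin, Nat.sub_add_cancel (by omega)] at h
end
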